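/- Let k ≥ 2, let Λ_k = [[0, 1], [ζ_{2^{k-1}}, 0]], and let A, B be d×d complex matrices with entries in Z[1/2, ζ_{2^{k-1}}] such that U = A + B·ζ_{2^k} is unitary. Then the 2d×2d matrix A ⊗ I₂ + B ⊗ Λ_k is unitary. -/

import Mathlib

open Matrix Kronecker Polynomial IntermediateField

noncomputable def zeta (k : ℕ) : ℂ := Complex.exp (2 * Real.pi * Complex.I / 2 ^ k)

noncomputable def Dz (k : ℕ) : Subring ℂ := Subring.closure {1 / 2, zeta k}

noncomputable def Lam (k : ℕ) : Matrix (Fin 2) (Fin 2) ℂ := !![0, 1; zeta (k - 1), 0]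

lemma zeta_prim (k : ℕ) : IsPrimitiveRoot (zeta k) (2 ^ k) := by
  have := Complex.isPrimitiveRoot_exp (2 ^ k) (by positivity)
  simpa [zeta, Complex.exp_eq_exp_iff_exists_int] using this

lemma zeta_int (k : ℕ) : IsIntegral ℚ (zeta k) :=
  ⟨X ^ (2 ^ k) - 1, monic_X_pow_sub_C _ (by positivity), by
    simp [(zeta_prim k).pow_eq_one, sub_eq_zero]⟩

lemma finrank_adjoin_zeta (k : ℕ) (hk : 1 ≤ k) :
    Module.finrank ℚ ℚ⟮zeta k⟯ = 2 ^ (k - 1) := by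
  have hprim := zeta_prim k
  have hirr : Irreducible (cyclotomic (2 ^ k) ℚ) := cyclotomic.irreducible_rat (by positivity)
  have hmin := hprim.minpoly_eq_cyclotomic_of_irreducible hirr
  rw [IntermediateField.adjoin.finrank (zeta_int k), ← hmin,
    natDegree_cyclotomic, Nat.totient_prime_pow Nat.prime_two hk]
  simp

lemma zeta_not_mem (k : ℕ) (hk : 2 ≤ k) : zeta k ∉ ℚ⟮zeta (k - 1)⟯ := by
  intro h
  have hle : ℚ⟮zeta k⟯ ≤ ℚ⟮zeta (k - 1)⟯ := by
    rw [IntermediateField.adjoin_le_iff]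
    exact Set.singleton_subset_iff.mpr h
  have hfd := IntermediateField.adjoin.finiteDimensional (zeta_int (k - 1))
  have heq := IntermediateField.eq_of_le_of_finrank_le hle (by
    rw [finrank_adjoin_zeta k (by omega), finrank_adjoin_zeta (k - 1) (by omega)]
    exact Nat.pow_le_pow_right (by norm_num) (by omega))
  have := finrank_adjoin_zeta k (by omega)
  rw [heq, finrank_adjoin_zeta (k - 1) (by omega)] at this
  have := Nat.pow_right_injective (le_refl 2) this
  omega

lemma conj_zeta_mul (k : ℕ) : (starRingEnd ℂ) (zeta k) * zeta k = 1 := by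
  rw [zeta, ← Complex.exp_conj, ← Complex.exp_add]
  have : (starRingEnd ℂ) (2 * ↑Real.pi * Complex.I / 2 ^ k) =
      -(2 * ↑Real.pi * Complex.I / 2 ^ k) := by
    simp [map_div₀, map_ofNat, map_pow, Complex.conj_I]
    ring
  rw [this, neg_add_cancel, Complex.exp_zero]

lemma zeta_sq (k : ℕ) (hk : 1 ≤ k) : zeta k ^ 2 = zeta (k - 1) := by
  rw [zeta, zeta, ← Complex.exp_nat_mul]
  congr 1
  have h2 : (2 : ℂ) ^ k = 2 * 2 ^ (k - 1) := by
    conv_lhs => rw [show k = (k - 1) + 1 by omega]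
    rw [pow_succ]
    ring
  have hne : (2 : ℂ) ^ (k - 1) ≠ 0 := pow_ne_zero _ two_ne_zero
  field_simp [h2]
  ring_nf
  rw [h2]; ring

lemma conj_mem_K (k : ℕ) {x : ℂ} (hx : x ∈ ℚ⟮zeta k⟯) :
    (starRingEnd ℂ) x ∈ ℚ⟮zeta k⟯ := by
  have hz : (starRingEnd ℂ) (zeta k) ∈ ℚ⟮zeta k⟯ := by
    have h1 : (starRingEnd ℂ) (zeta k) = (zeta k)⁻¹ :=
      eq_inv_of_mul_eq_one_left (conj_zeta_mul k)
    rw [h1]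
    exact inv_mem (IntermediateField.mem_adjoin_simple_self ℚ (zeta k))
  let f : ℂ →ₐ[ℚ] ℂ := ((Complex.conjAe.restrictScalars ℚ)).toAlgHom
  have hmap : f x ∈ (ℚ⟮zeta k⟯).map f :=
    ⟨x, hx, rfl⟩
  rw [IntermediateField.adjoin_map] at hmap
  have himg : f '' {zeta k} = {(starRingEnd ℂ) (zeta k)} := by
    rw [Set.image_singleton]
    rfl
  rw [himg] at hmap
  have hle : ℚ⟮(starRingEnd ℂ) (zeta k)⟯ ≤ ℚ⟮zeta k⟯ := by
    rw [IntermediateField.adjoin_le_iff]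
    exact Set.singleton_subset_iff.mpr hz
  exact hle hmap


lemma Dz_mem_K (k : ℕ) {x : ℂ} (hx : x ∈ Dz k) : x ∈ ℚ⟮zeta k⟯ := by
  have hle : Dz k ≤ (ℚ⟮zeta k⟯).toSubfield.toSubring := by
    rw [Dz, Subring.closure_le]
    rintro y (rfl | rfl)
    · show (1/2 : ℂ) ∈ ℚ⟮zeta k⟯
      exact IntermediateField.div_mem _ (IntermediateField.one_mem _)
        (by exact_mod_cast IntermediateField.natCast_mem ℚ⟮zeta k⟯ 2)
    · exact IntermediateField.mem_adjoin_simple_self ℚ (zeta k)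
  exact hle hx

lemma indep (k : ℕ) (hk : 2 ≤ k) {x y : ℂ} (hx : x ∈ ℚ⟮zeta (k - 1)⟯)
    (hy : y ∈ ℚ⟮zeta (k - 1)⟯) (h : x + zeta k * y = 0) : x = 0 ∧ y = 0 := by
  by_cases hy0 : y = 0
  · subst hy0; simpa using h
  · exfalso
    apply zeta_not_mem k hk
    have : zeta k = -x / y := by
      rw [eq_div_iff hy0]
      linear_combination h
    rw [this]
    exact div_mem (neg_mem hx) hy


lemma kron_conjT {d : ℕ} (X : Matrix (Fin d) (Fin d) ℂ) (Y : Matrix (Fin 2) (Fin 2) ℂ) :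
    (X ⊗ₖ Y)ᴴ = Xᴴ ⊗ₖ Yᴴ := by
  ext ⟨i, j⟩ ⟨i', j'⟩
  simp [Matrix.conjTranspose_apply, Matrix.kroneckerMap_apply, star_mul']

lemma Lam_conjT (k : ℕ) : (Lam k)ᴴ = (starRingEnd ℂ) (zeta (k - 1)) • Lam k := by
  ext i j
  fin_cases i <;> fin_cases j <;>
    simp [Lam, Matrix.conjTranspose_apply, conj_zeta_mul (k - 1)]

lemma Lam_mul_Lam (k : ℕ) : Lam k * Lam k = zeta (k - 1) • 1 := by
  ext i j
  fin_cases i <;> fin_cases j <;>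
    simp [Lam, Matrix.mul_apply, Fin.sum_univ_two, Matrix.one_apply]

lemma zmulc (k : ℕ) (hk : 2 ≤ k) :
    zeta k * (starRingEnd ℂ) (zeta (k - 1)) = (starRingEnd ℂ) (zeta k) := by
  rw [← zeta_sq k (by omega), map_pow]
  linear_combination (starRingEnd ℂ) (zeta k) * conj_zeta_mul k

theorem stmt_8 (k : ℕ) (hk : 2 ≤ k) (d : ℕ) (A B : Matrix (Fin d) (Fin d) ℂ)
    (hA : ∀ i j, A i j ∈ Dz (k - 1)) (hB : ∀ i j, B i j ∈ Dz (k - 1))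
    (hU : (A + zeta k • B) ∈ Matrix.unitaryGroup (Fin d) ℂ) :
    (A ⊗ₖ (1 : Matrix (Fin 2) (Fin 2) ℂ) + B ⊗ₖ Lam k) ∈
      Matrix.unitaryGroup (Fin d × Fin 2) ℂ := by
  rw [Matrix.mem_unitaryGroup_iff'] at hU ⊢
  have hcz := conj_zeta_mul k
  have hcc := conj_zeta_mul (k - 1)
  set z := zeta k with hz
  set c := zeta (k - 1) with hcdef
  set X := Aᴴ * A + Bᴴ * B - 1 with hXdef
  set Y := Aᴴ * B + (starRingEnd ℂ) c • (Bᴴ * A) with hYdef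
  have expand : star (A + z • B) * (A + z • B) =
      Aᴴ * A + Bᴴ * B + z • (Aᴴ * B) + (starRingEnd ℂ) z • (Bᴴ * A) := by
    rw [Matrix.star_eq_conjTranspose, Matrix.conjTranspose_add, Matrix.conjTranspose_smul]
    rw [add_mul, mul_add, mul_add, smul_mul_assoc, smul_mul_assoc,
      Matrix.mul_smul, Matrix.mul_smul, smul_smul]
    simp only [Complex.star_def]
    rw [hcz, one_smul]
    abel
  have hXY : X + z • Y = 0 := by
    rw [hXdef, hYdef, smul_add, smul_smul, zmulc k hk]
    rw [expand] at hU
    rw [sub_add_eq_add_sub, sub_eq_zero, ← hU]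
    abel
  -- entry membership
  have hA' : ∀ i j, A i j ∈ ℚ⟮c⟯ := fun i j => Dz_mem_K _ (hA i j)
  have hB' : ∀ i j, B i j ∈ ℚ⟮c⟯ := fun i j => Dz_mem_K _ (hB i j)
  have hmul : ∀ (M N : Matrix (Fin d) (Fin d) ℂ),
      (∀ i j, M i j ∈ ℚ⟮c⟯) → (∀ i j, N i j ∈ ℚ⟮c⟯) →
      ∀ i j, (Mᴴ * N) i j ∈ ℚ⟮c⟯ := by
    intro M N hM hN i j
    rw [Matrix.mul_apply]
    exact Subfield.sum_mem _ fun l _ =>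
      mul_mem (conj_mem_K _ (hM l i)) (hN l j)
  have hc_mem : (starRingEnd ℂ) c ∈ ℚ⟮c⟯ :=
    conj_mem_K _ (IntermediateField.mem_adjoin_simple_self ℚ c)
  have hXmem : ∀ i j, X i j ∈ ℚ⟮c⟯ := by
    intro i j
    rw [hXdef]
    simp only [Matrix.sub_apply, Matrix.add_apply]
    refine sub_mem (add_mem (hmul A A hA' hA' i j) (hmul B B hB' hB' i j)) ?_
    rw [Matrix.one_apply]
    split
    exacts [one_mem _, zero_mem _]
  have hYmem : ∀ i j, Y i j ∈ ℚ⟮c⟯ := by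
    intro i j
    rw [hYdef]
    simp only [Matrix.add_apply, Matrix.smul_apply, smul_eq_mul]
    exact add_mem (hmul A B hA' hB' i j) (mul_mem hc_mem (hmul B A hB' hA' i j))
  have hent : ∀ i j, X i j = 0 ∧ Y i j = 0 := by
    intro i j
    refine indep k hk (hXmem i j) (hYmem i j) ?_
    have := congrFun (congrFun hXY i) j
    simpa [Matrix.add_apply, Matrix.smul_apply, smul_eq_mul] using this
  have hX0 : Aᴴ * A + Bᴴ * B = 1 := by
    have : X = 0 := by ext i j; exact (hent i j).1
    rw [hXdef, sub_eq_zero] at this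
    exact this
  have hY0 : Y = 0 := by ext i j; exact (hent i j).2
  -- conclude
  rw [Matrix.star_eq_conjTranspose, Matrix.conjTranspose_add, kron_conjT, kron_conjT,
    Matrix.conjTranspose_one, Lam_conjT, Matrix.kronecker_smul]
  rw [add_mul, mul_add, mul_add, smul_mul_assoc, smul_mul_assoc,
    ← Matrix.mul_kronecker_mul, ← Matrix.mul_kronecker_mul, ← Matrix.mul_kronecker_mul,
    ← Matrix.mul_kronecker_mul, Lam_mul_Lam, Matrix.kronecker_smul, smul_smul, hcc, one_smul]
  have hfin : (Aᴴ * A + Bᴴ * B) ⊗ₖ (1 : Matrix (Fin 2) (Fin 2) ℂ) +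
      (Aᴴ * B + (starRingEnd ℂ) c • (Bᴴ * A)) ⊗ₖ Lam k = 1 := by
    rw [hX0, ← hYdef, hY0, Matrix.zero_kronecker, add_zero, Matrix.one_kronecker_one]
  rw [Matrix.add_kronecker, Matrix.add_kronecker, Matrix.smul_kronecker] at hfin
  simp only [Matrix.one_mul, Matrix.mul_one, ← hcdef]
  rw [← hfin]
  abel
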